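/- arXiv:0708.3396 — 2 statements merged into one kernel-verified Lean document; each statement's English description precedes it below -/
import Mathlib

section
/- Let m ≥ 1 and n = 2m. Define γ_i := A_m(i−1) − A_m(i) for i = 1,…,n, and let T be the n×n symmetric Toeplitz matrix with entries T[i,j] = γ_{n−|i−j|}. Then each γ_i ≥ 0 and the spectral norm (largest singular value) of T equals 1. -/
/-- `ξ i = C(2i, i) / 4^i`. -/
noncomputable def xi (i : ℕ) : ℝ := (Nat.choose (2 * i) i : ℝ) / 4 ^ i

/-- `A_m(j) = ∑_{i=0}^{m−j−1} ξ_i ξ_{i+j}` (which is `0` when `j ≥ m`). -/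
noncomputable def Am (m j : ℕ) : ℝ := ∑ i ∈ Finset.range (m - j), xi i * xi (i + j)

/-- `toeplitz n γ` is the `n×n` symmetric Toeplitz matrix `Toeplitz(γ_n, …, γ_1)` whose
`(i,j)` entry (for `1 ≤ i, j ≤ n`) is `γ_{n − |i−j|}`. -/
def toeplitz (n : ℕ) (γ : ℕ → ℝ) : Matrix (Fin n) (Fin n) ℝ :=
  Matrix.of fun i j => γ (n - (max (i : ℕ) (j : ℕ) - min (i : ℕ) (j : ℕ)))

/-- The spectral norm (largest singular value) of a real matrix, as the operator norm
of its action on Euclidean space. -/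
noncomputable def sNorm {n : ℕ} (M : Matrix (Fin n) (Fin n) ℝ) : ℝ :=
  ‖Matrix.toEuclideanCLM (𝕜 := ℝ) M‖

/-!
Since `A_m(j) = 0` for `j ≥ m`, `γ_i` vanishes for `i > m`, so `T` only couples the first `m`
coordinates with the last `m`. The convolution identity `∑_{k+l=u} ξ_k ξ_l = 1` (the square of
`(1-4x)^{-1/2}` is `(1-4x)^{-1}`) makes the sums `∑_k ξ_k A_m(j+k)` telescope, which gives
`T v = v` for the positive palindromic vector `v = (ξ_0, …, ξ_{m-1}, ξ_{m-1}, …, ξ_0)`.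
As `T` is symmetric with nonnegative entries, the Schur test with weight `v` gives `‖T‖ ≤ 1`,
and `v` itself gives `‖T‖ ≥ 1`. Finally `γ_i ≥ 0` because `ξ`, hence `A_m`, is decreasing.
-/

open Finset Matrix

lemma xi_eq_centralBinom_div (i : ℕ) : xi i = Nat.centralBinom i / 4 ^ i := rfl

lemma xi_pos (i : ℕ) : 0 < xi i :=
  div_pos (mod_cast Nat.centralBinom_pos i) (by positivity)

lemma succ_mul_xi_succ (i : ℕ) : (i + 1) * xi (i + 1) = (i + 1 / 2) * xi i := by
  have h : ((i + 1) * Nat.centralBinom (i + 1) : ℝ) = 2 * (2 * i + 1) * Nat.centralBinom i :=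
    mod_cast Nat.succ_mul_centralBinom_succ i
  simp only [xi_eq_centralBinom_div, pow_succ]
  field_simp
  linear_combination 2 * h

lemma xi_antitone : Antitone xi := by
  refine antitone_nat_of_succ_le fun i => le_of_mul_le_mul_left ?_ (by positivity : (0 : ℝ) < i + 1)
  rw [succ_mul_xi_succ]
  gcongr
  · exact (xi_pos i).le
  · norm_num

theorem sum_antidiagonal_xi_mul_xi (n : ℕ) : ∑ p ∈ antidiagonal n, xi p.1 * xi p.2 = 1 := by
  obtain ⟨S, hS⟩ : ∃ S : ℕ → ℝ, ∀ n, S n = ∑ p ∈ antidiagonal n, xi p.1 * xi p.2 :=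
    ⟨_, fun _ => rfl⟩
  obtain ⟨W, hW⟩ : ∃ W : ℕ → ℝ, ∀ n, W n = ∑ p ∈ antidiagonal n, (p.1 : ℝ) * (xi p.1 * xi p.2) :=
    ⟨_, fun _ => rfl⟩
  -- under `p ↦ p.swap` the weight `p.1` becomes `p.2`, and `p.1 + p.2 = n`
  have two_mul_W : ∀ n, 2 * W n = n * S n := fun n => by
    have hswap : W n = ∑ p ∈ antidiagonal n, (p.2 : ℝ) * (xi p.1 * xi p.2) := by
      rw [hW, ← Nat.sum_antidiagonal_swap]
      exact sum_congr rfl fun p _ => by simp only [Prod.fst_swap, Prod.snd_swap]; ring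
    calc 2 * W n = ∑ p ∈ antidiagonal n, ((p.1 + p.2 : ℕ) : ℝ) * (xi p.1 * xi p.2) := by
          rw [two_mul]; nth_rw 2 [hswap]
          rw [hW, ← sum_add_distrib]; push_cast; simp only [add_mul]
      _ = n * S n := by
          rw [hS, mul_sum]
          exact sum_congr rfl fun p hp => by rw [mem_antidiagonal.1 hp]
  have W_succ : ∀ n, W (n + 1) = W n + S n / 2 := fun n => by
    rw [hW, Nat.sum_antidiagonal_succ]
    simp only [Nat.cast_zero, zero_mul, zero_add, Nat.cast_succ, ← mul_assoc, succ_mul_xi_succ]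
    rw [hW, hS, sum_div, ← sum_add_distrib]
    exact sum_congr rfl fun p _ => by ring
  induction n with
  | zero => simp [xi]
  | succ n ih =>
    have h : ((n + 1 : ℕ) : ℝ) * S (n + 1) = (n + 1 : ℕ) * S n := by
      rw [← two_mul_W, W_succ, mul_add, two_mul_W]; push_cast; ring
    rw [← hS, mul_left_cancel₀ (by positivity) h, hS, ih]

lemma sum_range_xi_mul_xi_sub (n : ℕ) : ∑ k ∈ range (n + 1), xi k * xi (n - k) = 1 := by
  rw [← Nat.sum_antidiagonal_eq_sum_range_succ (fun i j => xi i * xi j), sum_antidiagonal_xi_mul_xi]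

lemma Am_eq_zero_of_le {m j : ℕ} (h : m ≤ j) : Am m j = 0 := by
  rw [Am, Nat.sub_eq_zero_of_le h, sum_range_zero]

lemma Am_antitone (m : ℕ) : Antitone (Am m) := by
  refine antitone_nat_of_succ_le fun j => ?_
  calc Am m (j + 1) ≤ ∑ i ∈ range (m - (j + 1)), xi i * xi (i + j) :=
        sum_le_sum fun i _ => mul_le_mul_of_nonneg_left (xi_antitone (by omega)) (xi_pos i).le
    _ ≤ Am m j :=
        sum_le_sum_of_subset_of_nonneg (range_subset_range.2 (by omega))
          fun i _ _ => (mul_pos (xi_pos i) (xi_pos _)).le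

lemma sum_range_xi_mul_Am (m j : ℕ) :
    ∑ k ∈ range m, xi k * Am m (j + k) = ∑ u ∈ range (m - j), xi (u + j) := by
  rw [← sum_subset (range_subset_range.2 (Nat.sub_le m j)) fun k _ hk => by
    rw [Am_eq_zero_of_le (by simp at hk; omega), mul_zero]]
  calc ∑ k ∈ range (m - j), xi k * Am m (j + k)
      = ∑ k ∈ range (m - j), ∑ s ∈ range (m - j - k), xi k * xi s * xi (s + k + j) :=
        sum_congr rfl fun k _ => by
          rw [Am, mul_sum, Nat.sub_add_eq]
          exact sum_congr rfl fun s _ => by rw [add_comm j k, ← add_assoc, mul_assoc]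
    _ = ∑ u ∈ range (m - j), ∑ k ∈ range (u + 1), xi k * xi (u - k) * xi (u - k + k + j) :=
        (sum_range_diag_flip _ fun k s => xi k * xi s * xi (s + k + j)).symm
    _ = ∑ u ∈ range (m - j), xi (u + j) := sum_congr rfl fun u _ => by
        rw [← one_mul (xi (u + j)), ← sum_range_xi_mul_xi_sub u, sum_mul]
        exact sum_congr rfl fun k hk => by
          rw [Nat.sub_add_cancel (Nat.lt_succ_iff.1 (mem_range.1 hk))]

noncomputable def gammaSeq (m i : ℕ) : ℝ := Am m (i - 1) - Am m i

lemma gammaSeq_nonneg (m i : ℕ) : 0 ≤ gammaSeq m i :=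
  sub_nonneg.2 (Am_antitone m (Nat.sub_le i 1))

lemma gammaSeq_eq_zero_of_lt {m i : ℕ} (h : m < i) : gammaSeq m i = 0 := by
  rw [gammaSeq, Am_eq_zero_of_le (by omega), Am_eq_zero_of_le h.le, sub_zero]

lemma sum_range_gammaSeq_mul_xi {m i : ℕ} (hi : i < m) :
    ∑ k ∈ range m, gammaSeq m (i + k + 1) * xi k = xi i := by
  have telescope : ∑ k ∈ range m, gammaSeq m (i + k + 1) * xi k
      = ∑ k ∈ range m, xi k * Am m (i + k) - ∑ k ∈ range m, xi k * Am m (i + 1 + k) := by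
    rw [← sum_sub_distrib]
    exact sum_congr rfl fun k _ => by
      rw [gammaSeq, Nat.add_sub_cancel, add_right_comm i 1 k]; ring
  have hmi : m - i = m - (i + 1) + 1 := by omega
  rw [telescope, sum_range_xi_mul_Am, sum_range_xi_mul_Am, hmi, sum_range_succ', zero_add]
  simp only [add_assoc, add_comm 1 i, add_sub_cancel_left]

namespace Matrix

variable {ι : Type*} [Fintype ι] [DecidableEq ι]

theorem opNorm_toEuclideanCLM_le_one_of_mulVec_le {M : Matrix ι ι ℝ} (hM : ∀ i j, 0 ≤ M i j)
    {v : ι → ℝ} (hv : ∀ i, 0 < v i) (hrow : M *ᵥ v ≤ v) (hcol : v ᵥ* M ≤ v) :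
    ‖toEuclideanCLM (𝕜 := ℝ) M‖ ≤ 1 := by
  -- weighted Cauchy–Schwarz: `(∑ⱼ Mᵢⱼ uⱼ)² ≤ (∑ⱼ Mᵢⱼ vⱼ) (∑ⱼ Mᵢⱼ uⱼ² / vⱼ)`
  have row_sq (u : ι → ℝ) (i : ι) : (M *ᵥ u) i ^ 2 ≤ v i * ∑ j, M i j * u j ^ 2 / v j :=
    calc (M *ᵥ u) i ^ 2 ≤ (∑ j, M i j * v j) * ∑ j, M i j * u j ^ 2 / v j :=
          sum_sq_le_sum_mul_sum_of_sq_le_mul _ (fun j _ => mul_nonneg (hM i j) (hv j).le)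
            (fun j _ => div_nonneg (mul_nonneg (hM i j) (sq_nonneg _)) (hv j).le)
            fun j _ => le_of_eq (by field_simp [(hv j).ne'])
      _ ≤ v i * ∑ j, M i j * u j ^ 2 / v j :=
          mul_le_mul_of_nonneg_right (hrow i)
            (sum_nonneg fun j _ => div_nonneg (mul_nonneg (hM i j) (sq_nonneg _)) (hv j).le)
  have sum_sq (u : ι → ℝ) : ∑ i, (M *ᵥ u) i ^ 2 ≤ ∑ j, u j ^ 2 :=
    calc ∑ i, (M *ᵥ u) i ^ 2 ≤ ∑ i, v i * ∑ j, M i j * u j ^ 2 / v j :=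
          sum_le_sum fun i _ => row_sq u i
      _ = ∑ j, (v ᵥ* M) j * (u j ^ 2 / v j) := by
          simp only [mul_sum, vecMul, dotProduct, sum_mul]
          rw [sum_comm]
          exact sum_congr rfl fun j _ => sum_congr rfl fun i _ => by ring
      _ ≤ ∑ j, v j * (u j ^ 2 / v j) :=
          sum_le_sum fun j _ => mul_le_mul_of_nonneg_right (hcol j)
            (div_nonneg (sq_nonneg _) (hv j).le)
      _ = ∑ j, u j ^ 2 := sum_congr rfl fun j _ => by field_simp [(hv j).ne']
  refine ContinuousLinearMap.opNorm_le_bound _ zero_le_one fun x => ?_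
  rw [one_mul, ← sq_le_sq₀ (norm_nonneg _) (norm_nonneg _), EuclideanSpace.real_norm_sq_eq,
    EuclideanSpace.real_norm_sq_eq]
  exact sum_sq x.ofLp

theorem opNorm_toEuclideanCLM_eq_one_of_mulVec_eq_self [Nonempty ι] {M : Matrix ι ι ℝ}
    (hM : ∀ i j, 0 ≤ M i j) (hsymm : M.IsSymm) {v : ι → ℝ} (hv : ∀ i, 0 < v i)
    (hMv : M *ᵥ v = v) : ‖toEuclideanCLM (𝕜 := ℝ) M‖ = 1 := by
  have hvM : v ᵥ* M = v := by rw [← mulVec_transpose, hsymm.eq, hMv]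
  refine le_antisymm (opNorm_toEuclideanCLM_le_one_of_mulVec_le hM hv hMv.le hvM.le) ?_
  have hv0 : 0 < ‖WithLp.toLp 2 v‖ :=
    norm_pos_iff.2 fun h => (hv (Classical.arbitrary ι)).ne' (congrFun (congrArg WithLp.ofLp h) _)
  have := (toEuclideanCLM (𝕜 := ℝ) M).le_opNorm (WithLp.toLp 2 v)
  rw [toEuclideanCLM_toLp, hMv] at this
  exact le_of_mul_le_mul_right (by simpa using this) hv0

lemma mulVec_rev {α : Type*} [NonUnitalNonAssocSemiring α] {n : ℕ} {M : Matrix (Fin n) (Fin n) α}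
    (hM : ∀ i j, M i.rev j.rev = M i j) {v : Fin n → α} (hv : ∀ i, v i.rev = v i) (i : Fin n) :
    (M *ᵥ v) i.rev = (M *ᵥ v) i := by
  simp only [mulVec, dotProduct]
  rw [← Equiv.sum_comp Fin.revPerm]
  exact sum_congr rfl fun j _ => by rw [Fin.revPerm_apply, hM, hv]

end Matrix

lemma toeplitz_isSymm (n : ℕ) (γ : ℕ → ℝ) : (toeplitz n γ).IsSymm :=
  IsSymm.ext fun i j => by simp only [toeplitz, of_apply, max_comm, min_comm]

lemma toeplitz_rev_rev (n : ℕ) (γ : ℕ → ℝ) (i j : Fin n) :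
    toeplitz n γ i.rev j.rev = toeplitz n γ i j := by
  simp only [toeplitz, of_apply, Fin.val_rev]
  congr 2
  omega

noncomputable def xiPalindrome (m : ℕ) : Fin (2 * m) → ℝ :=
  fun p => xi (min (p : ℕ) (2 * m - 1 - p))

lemma xiPalindrome_rev (m : ℕ) (p : Fin (2 * m)) : xiPalindrome m p.rev = xiPalindrome m p := by
  simp only [xiPalindrome, Fin.val_rev]
  congr 1
  omega

lemma toeplitz_gammaSeq_mulVec_xiPalindrome_apply_of_le {m : ℕ} {p : Fin (2 * m)} (hp : m ≤ p) :
    (toeplitz (2 * m) (gammaSeq m) *ᵥ xiPalindrome m) p = xiPalindrome m p := by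
  set f : ℕ → ℝ := fun q => gammaSeq m (2 * m - (max (p : ℕ) q - min (p : ℕ) q))
    * xi (min q (2 * m - 1 - q)) with hf
  have hsum : (toeplitz (2 * m) (gammaSeq m) *ᵥ xiPalindrome m) p = ∑ q ∈ range (2 * m), f q :=
    (Fin.sum_univ_eq_sum_range f _)
  have hlow : ∑ q ∈ range m, f q = ∑ k ∈ range m, gammaSeq m (2 * m - 1 - p + k + 1) * xi k :=
    sum_congr rfl fun q hq => by
      have := mem_range.1 hq
      simp only [hf]
      congr 2 <;> omega
  have hhigh : ∑ k ∈ range m, f (m + k) = 0 :=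
    sum_eq_zero fun k hk => by
      have := mem_range.1 hk
      simp only [hf]
      rw [gammaSeq_eq_zero_of_lt (by omega), zero_mul]
  rw [hsum, two_mul, sum_range_add, hhigh, add_zero, hlow,
    sum_range_gammaSeq_mul_xi (by omega), xiPalindrome]
  congr 1
  omega

lemma toeplitz_gammaSeq_mulVec_xiPalindrome (m : ℕ) :
    toeplitz (2 * m) (gammaSeq m) *ᵥ xiPalindrome m = xiPalindrome m := by
  funext p
  rcases le_or_gt m p with hp | hp
  · exact toeplitz_gammaSeq_mulVec_xiPalindrome_apply_of_le hp
  · have hrev : m ≤ (p.rev : ℕ) := by rw [Fin.val_rev]; omega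
    rw [← p.rev_rev, mulVec_rev (toeplitz_rev_rev _ _) (xiPalindrome_rev m),
      toeplitz_gammaSeq_mulVec_xiPalindrome_apply_of_le hrev, xiPalindrome_rev, Fin.rev_rev]

/-- Let `m ≥ 1`, `n = 2m`, and `γ_i = A_m(i−1) − A_m(i)` for `i = 1, …, n`.  Then each
`γ_i ≥ 0`, and the spectral norm of the `n×n` symmetric Toeplitz matrix
`Toeplitz(γ_n, …, γ_1)` equals `1`. -/
theorem even_toeplitz_norm (m : ℕ) (hm : 1 ≤ m) :
    let n := 2 * m
    let γ : ℕ → ℝ := fun i => Am m (i - 1) - Am m i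
    (∀ i, 1 ≤ i → i ≤ n → 0 ≤ γ i) ∧ sNorm (toeplitz n γ) = 1 := by
  intro n γ
  have : Nonempty (Fin n) := ⟨⟨0, by omega⟩⟩
  exact ⟨fun i _ _ => gammaSeq_nonneg m i,
    opNorm_toEuclideanCLM_eq_one_of_mulVec_eq_self (fun _ _ => gammaSeq_nonneg m _)
      (toeplitz_isSymm n γ) (fun _ => xi_pos _) (toeplitz_gammaSeq_mulVec_xiPalindrome m)⟩
end

section
/- Let n ≥ 2 and let R be the n×n symmetric matrix with entries R[i,j] = ξ_{i−1} ξ_{n−j} for i ≤ j and R[i,j] = ξ_{j−1} ξ_{n−i} for i > j. Then the trace norm of R (the sum of the absolute values of its eigenvalues) satisfies ‖R‖_tr ≤ 2 ∑_{k=0}^{n−1} ξ_k² + 1. -/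
open Finset Matrix

lemma two_mul_succ_mul_xi_succ (i : ℕ) : 2 * (i + 1) * xi (i + 1) = (2 * i + 1) * xi i := by
  have h : ((i + 1 : ℕ) : ℝ) * (i + 1).centralBinom = 2 * (2 * i + 1) * i.centralBinom := by
    exact_mod_cast Nat.succ_mul_centralBinom_succ i
  simp only [xi, ← Nat.centralBinom_eq_two_mul_choose]
  push_cast at h
  rw [pow_succ]
  field_simp
  linear_combination 2 * h

lemma two_mul_sum_mul_xi_mul_xi (m : ℕ) :
    2 * ∑ k ∈ range (m + 1), (k : ℝ) * (xi k * xi (m - k)) =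
      m * ∑ k ∈ range (m + 1), xi k * xi (m - k) := by
  rw [two_mul]
  nth_rewrite 1 [← sum_range_reflect]
  rw [← sum_add_distrib, mul_sum]
  refine sum_congr rfl fun k hk => ?_
  have hkm : k ≤ m := Nat.lt_succ_iff.1 (mem_range.1 hk)
  simp only [add_tsub_cancel_right, Nat.sub_sub_self hkm, Nat.cast_sub hkm]
  ring

lemma sum_xi_mul_xi (m : ℕ) : ∑ k ∈ range (m + 1), xi k * xi (m - k) = 1 := by
  induction m with
  | zero => simp [xi]
  | succ m ih =>
    have key : ((m : ℝ) + 1) * ∑ k ∈ range (m + 2), xi k * xi (m + 1 - k) =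
        (m + 1) * ∑ k ∈ range (m + 1), xi k * xi (m - k) := by
      calc ((m : ℝ) + 1) * ∑ k ∈ range (m + 2), xi k * xi (m + 1 - k)
          = 2 * ∑ k ∈ range (m + 1), (k + 1 : ℝ) * (xi (k + 1) * xi (m - k)) := by
            rw [← Nat.cast_succ, ← two_mul_sum_mul_xi_mul_xi, sum_range_succ']
            simp
        _ = ∑ k ∈ range (m + 1), (2 * k + 1 : ℝ) * (xi k * xi (m - k)) := by
            rw [mul_sum]
            refine sum_congr rfl fun k _ => ?_
            linear_combination xi (m - k) * two_mul_succ_mul_xi_succ k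
        _ = (m + 1) * ∑ k ∈ range (m + 1), xi k * xi (m - k) := by
            simp only [add_mul, sum_add_distrib, mul_assoc, ← mul_sum,
              two_mul_sum_mul_xi_mul_xi, one_mul]
    rw [ih, mul_one] at key
    exact (mul_eq_left₀ (by positivity)).1 key

theorem Finset.sum_sum_mul_max_le {ι : Type*} [LinearOrder ι] {d : ι → ℝ} (hd : Monotone d)
    (y : ι → ℝ) (s : Finset ι) {a : ι} (ha : ∀ i ∈ s, i ≤ a) :
    ∑ i ∈ s, ∑ j ∈ s, y i * y j * d (max i j) ≤ d a * (∑ i ∈ s, y i) ^ 2 := by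
  classical
  induction s using Finset.induction_on_max generalizing a with
  | empty => simp
  | insert b s hb ih =>
    have hbs : b ∉ s := fun h => lt_irrefl b (hb b h)
    have hrow : ∑ j ∈ s, y b * y j * d (max b j) = d b * y b * ∑ j ∈ s, y j := by
      rw [mul_sum]
      exact sum_congr rfl fun j hj => by rw [max_eq_left (hb j hj).le]; ring
    have hcol : ∑ i ∈ s, y i * y b * d (max i b) = d b * y b * ∑ j ∈ s, y j := by
      rw [mul_sum]
      exact sum_congr rfl fun i hi => by rw [max_eq_right (hb i hi).le]; ring
    have hQ := ih fun i hi => (hb i hi).le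
    have hda := hd (ha b (mem_insert_self b s))
    simp only [sum_insert hbs, sum_add_distrib, max_self, hrow, hcol]
    nlinarith [mul_nonneg (sub_nonneg.2 hda) (sq_nonneg (y b + ∑ i ∈ s, y i))]

theorem Finset.sum_sum_mul_max_nonpos {ι : Type*} [Fintype ι] [LinearOrder ι] {d : ι → ℝ}
    (hd : Monotone d) {y : ι → ℝ} (hy : ∑ i, y i = 0) :
    ∑ i, ∑ j, y i * y j * d (max i j) ≤ 0 := by
  cases isEmpty_or_nonempty ι
  · simp
  · simpa [hy] using sum_sum_mul_max_le hd y univ (a := univ.max' univ_nonempty)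
      fun i _ => le_max' univ i (mem_univ i)

namespace Matrix

variable {ι : Type*} [Fintype ι]

theorem abs_le_of_mulVec_eq_smul {A : Matrix ι ι ℝ} (hA : ∀ i j, 0 ≤ A i j) {f : ι → ℝ}
    (hf : ∀ i, 0 < f i) {c : ℝ} (hAf : ∀ i, (A *ᵥ f) i ≤ c * f i) {μ : ℝ} {v : ι → ℝ}
    (hv : v ≠ 0) (hμ : A *ᵥ v = μ • v) : |μ| ≤ c := by
  obtain ⟨j, hj⟩ := Function.ne_iff.1 hv
  have : Nonempty ι := ⟨j⟩
  obtain ⟨i, -, hi⟩ := exists_max_image univ (fun i => |v i| / f i) univ_nonempty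
  set t := |v i| / f i with ht_def
  have hle : ∀ k, |v k| ≤ t * f k := fun k => (div_le_iff₀ (hf k)).1 (hi k (mem_univ k))
  have ht : 0 < t := (div_pos (abs_pos.2 hj) (hf j)).trans_le (hi j (mem_univ j))
  have hvi : 0 < |v i| := by simpa [t, hf i] using ht
  have key : |μ| * |v i| ≤ c * |v i| := calc
    |μ| * |v i| = |∑ k, A i k * v k| := by
      rw [← abs_mul, ← smul_eq_mul, ← Pi.smul_apply, ← hμ]; rfl
    _ ≤ ∑ k, A i k * |v k| :=
      (abs_sum_le_sum_abs _ _).trans_eq (by simp [abs_mul, abs_of_nonneg (hA i _)])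
    _ ≤ ∑ k, A i k * (t * f k) := sum_le_sum fun k _ => mul_le_mul_of_nonneg_left (hle k) (hA i k)
    _ = t * (A *ᵥ f) i := by
      rw [mulVec, dotProduct, mul_sum]
      exact sum_congr rfl fun k _ => by ring
    _ ≤ t * (c * f i) := mul_le_mul_of_nonneg_left (hAf i) ht.le
    _ = c * |v i| := by rw [ht_def, mul_left_comm, div_mul_cancel₀ _ (hf i).ne']
  exact le_of_mul_le_mul_right key hvi

theorem dotProduct_mulVec_smul_add_smul {A : Matrix ι ι ℝ} {v w : ι → ℝ} {a b : ℝ}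
    (hv : A *ᵥ v = a • v) (hw : A *ᵥ w = b • w) (hvw : v ⬝ᵥ w = 0) (p q : ℝ) :
    (p • v + q • w) ⬝ᵥ (A *ᵥ (p • v + q • w)) = p ^ 2 * a * (v ⬝ᵥ v) + q ^ 2 * b * (w ⬝ᵥ w) := by
  simp only [mulVec_add, mulVec_smul, hv, hw, add_dotProduct, dotProduct_add, smul_dotProduct,
    dotProduct_smul, dotProduct_comm w v, hvw, smul_eq_mul]
  ring

variable [DecidableEq ι] {A : Matrix ι ι ℝ}

theorem IsHermitian.subsingleton_eigenvalues_pos (hA : A.IsHermitian) {u : ι → ℝ}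
    (hu : ∀ x, u ⬝ᵥ x = 0 → x ⬝ᵥ (A *ᵥ x) ≤ 0) : {i | 0 < hA.eigenvalues i}.Subsingleton := by
  intro i (hi : 0 < hA.eigenvalues i) j (hj : 0 < hA.eigenvalues j)
  by_contra hij
  have horth : ∀ k l, ⇑(hA.eigenvectorBasis k) ⬝ᵥ ⇑(hA.eigenvectorBasis l) =
      if k = l then 1 else 0 := fun k l => by
    simpa [EuclideanSpace.inner_eq_star_dotProduct, dotProduct_comm] using
      orthonormal_iff_ite.1 hA.eigenvectorBasis.orthonormal k l
  have hform (p q : ℝ) := dotProduct_mulVec_smul_add_smul (hA.mulVec_eigenvectorBasis i)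
    (hA.mulVec_eigenvectorBasis j) ((horth i j).trans (if_neg hij)) p q
  rw [horth, horth, if_pos rfl, if_pos rfl] at hform
  by_cases h : u ⬝ᵥ hA.eigenvectorBasis i = 0
  · have := hu ((1 : ℝ) • hA.eigenvectorBasis i + (0 : ℝ) • hA.eigenvectorBasis j) (by simp [h])
    rw [hform] at this
    linarith
  · have := hu ((u ⬝ᵥ hA.eigenvectorBasis j) • hA.eigenvectorBasis i +
      (-(u ⬝ᵥ hA.eigenvectorBasis i)) • hA.eigenvectorBasis j) (by
        simp only [dotProduct_add, dotProduct_smul, smul_eq_mul]; ring)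
    rw [hform] at this
    have : 0 < (u ⬝ᵥ hA.eigenvectorBasis i) ^ 2 := by positivity
    nlinarith [mul_nonneg (sq_nonneg (u ⬝ᵥ hA.eigenvectorBasis j)) hi.le]

theorem IsHermitian.sum_abs_eigenvalues_le (hA : A.IsHermitian)
    (hpos : {i | 0 < hA.eigenvalues i}.Subsingleton)
    {c : ℝ} (hc0 : 0 ≤ c) (hc : ∀ i, hA.eigenvalues i ≤ c) :
    ∑ i, |hA.eigenvalues i| ≤ 2 * c - A.trace := by
  have hpos_sum : ∑ i, max (hA.eigenvalues i) 0 ≤ c := by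
    by_cases h : ∃ i, 0 < hA.eigenvalues i
    · obtain ⟨i, hi⟩ := h
      rw [sum_eq_single i (fun j _ hji => max_eq_right (not_lt.1 fun hj => hji (hpos hj hi)))
        (by simp)]
      exact max_le (hc i) hc0
    · simp only [not_exists, not_lt] at h
      simpa [max_eq_right (h _)] using hc0
  have habs : ∀ x : ℝ, |x| = 2 * max x 0 - x := fun x => by
    rcases le_total x 0 with h | h <;> simp [h, abs_of_nonpos, abs_of_nonneg]; ring
  rw [hA.trace_eq_sum_eigenvalues]
  simp only [habs, sum_sub_distrib, ← mul_sum, RCLike.ofReal_real_eq_id, id]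
  linarith

end Matrix

theorem Fin.sum_univ_rev_eq_sum_range {M : Type*} [AddCommMonoid M] (g : ℕ → M) (n : ℕ) :
    ∑ j : Fin n, g (n - 1 - j) = ∑ k ∈ range n, g k := by
  rw [Fin.sum_univ_eq_sum_range (fun j => g (n - 1 - j)), sum_range_reflect]

lemma sum_fin_xi_mul_xi_rev {n : ℕ} (hn : 0 < n) : ∑ j : Fin n, xi j * xi (n - 1 - j) = 1 := by
  obtain ⟨m, rfl⟩ : ∃ m, n = m + 1 := ⟨n - 1, by omega⟩
  simpa [Fin.sum_univ_eq_sum_range (fun k => xi k * xi (m - k))] using sum_xi_mul_xi m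

lemma monotone_xi_rev_div_xi (n : ℕ) : Monotone fun m : ℕ => xi (n - 1 - m) / xi m :=
  fun _ _ h => div_le_div₀ (xi_pos _).le (xi_antitone (by omega)) (xi_pos _) (xi_antitone h)

noncomputable def negadvMatrix (n : ℕ) : Matrix (Fin n) (Fin n) ℝ :=
  Matrix.of fun (i j : Fin n) =>
    if (i : ℕ) ≤ (j : ℕ) then xi i * xi (n - 1 - (j : ℕ)) else xi j * xi (n - 1 - (i : ℕ))

namespace negadvMatrix

variable {n : ℕ}

lemma nonneg (i j : Fin n) : 0 ≤ negadvMatrix n i j := by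
  rw [negadvMatrix, of_apply]
  split_ifs <;> exact mul_nonneg (xi_pos _).le (xi_pos _).le

lemma trace_eq (hn : 0 < n) : (negadvMatrix n).trace = 1 := by
  simpa [Matrix.trace, negadvMatrix] using sum_fin_xi_mul_xi_rev hn

lemma apply_eq_mul_mul (i j : Fin n) :
    negadvMatrix n i j =
      xi i * xi j * (xi (n - 1 - (max i j : Fin n)) / xi (max i j : Fin n)) := by
  have := xi_pos i
  have := xi_pos j
  rw [negadvMatrix, of_apply]
  split_ifs with h
  · rw [Fin.coe_max, max_eq_right h]; field_simp
  · rw [Fin.coe_max, max_eq_left (not_le.1 h).le]; field_simp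

lemma dotProduct_mulVec_nonpos (x : Fin n → ℝ) (hx : (fun i : Fin n => xi i) ⬝ᵥ x = 0) :
    x ⬝ᵥ (negadvMatrix n *ᵥ x) ≤ 0 := by
  have hd : Monotone fun m : Fin n => xi (n - 1 - m) / xi m :=
    (monotone_xi_rev_div_xi n).comp Fin.val_strictMono.monotone
  convert sum_sum_mul_max_nonpos hd (y := fun i => xi i * x i) hx using 1
  simp only [dotProduct, Matrix.mulVec, mul_sum, apply_eq_mul_mul]
  refine sum_congr rfl fun i _ => sum_congr rfl fun j _ => ?_
  ring

lemma apply_mul_le (i j : Fin n) :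
    negadvMatrix n i j * (xi j + xi (n - 1 - j)) ≤
      xi i * (xi j * xi (n - 1 - j) + xi (n - 1 - j) ^ 2) +
        xi (n - 1 - i) * (xi j * xi (n - 1 - j) + xi j ^ 2) := by
  have hp (k l : ℕ) : 0 ≤ xi k * (xi j * xi (n - 1 - j) + xi l ^ 2) :=
    mul_nonneg (xi_pos k).le (add_nonneg (mul_nonneg (xi_pos _).le (xi_pos _).le) (sq_nonneg _))
  rw [negadvMatrix, of_apply]
  split_ifs
  · nlinarith [hp (n - 1 - i) j]
  · nlinarith [hp i (n - 1 - j)]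

lemma mulVec_le (i : Fin n) :
    (negadvMatrix n *ᵥ fun j => xi j + xi (n - 1 - j)) i ≤
      (∑ k ∈ range n, xi k ^ 2 + 1) * (xi i + xi (n - 1 - i)) := by
  simp only [mulVec, dotProduct]
  calc ∑ j, negadvMatrix n i j * (xi j + xi (n - 1 - j))
      ≤ ∑ j : Fin n, (xi i * (xi j * xi (n - 1 - j) + xi (n - 1 - j) ^ 2) +
          xi (n - 1 - i) * (xi j * xi (n - 1 - j) + xi j ^ 2)) :=
        sum_le_sum fun j _ => apply_mul_le i j
    _ = (∑ k ∈ range n, xi k ^ 2 + 1) * (xi i + xi (n - 1 - i)) := by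
      simp only [sum_add_distrib, ← mul_sum, sum_fin_xi_mul_xi_rev i.pos,
        Fin.sum_univ_rev_eq_sum_range (fun k => xi k ^ 2),
        Fin.sum_univ_eq_sum_range (fun k => xi k ^ 2)]
      ring

end negadvMatrix

/-- Let `n ≥ 2` and let `R` be the `n×n` symmetric matrix with entries (`1`-based)
`R[i,j] = ξ_{i−1} ξ_{n−j}` for `i ≤ j` and `R[i,j] = ξ_{j−1} ξ_{n−i}` for `i > j`.
Then the trace norm of `R` (the sum of the absolute values of its eigenvalues)
is at most `2 ∑_{k=0}^{n−1} ξ_k² + 1`. -/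
theorem negadv_trace_norm (n : ℕ) (hn : 2 ≤ n)
    (R : Matrix (Fin n) (Fin n) ℝ)
    (hRdef : R = Matrix.of fun (i j : Fin n) =>
      if (i : ℕ) ≤ (j : ℕ) then xi i * xi (n - 1 - (j : ℕ))
      else xi j * xi (n - 1 - (i : ℕ)))
    (hR : R.IsHermitian) :
    ∑ i, |hR.eigenvalues i| ≤ 2 * ∑ k ∈ Finset.range n, (xi k) ^ 2 + 1 := by
  change R = negadvMatrix n at hRdef
  subst hRdef
  have hpos := hR.subsingleton_eigenvalues_pos negadvMatrix.dotProduct_mulVec_nonpos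
  have hbound (i : Fin n) : hR.eigenvalues i ≤ ∑ k ∈ range n, xi k ^ 2 + 1 :=
    (le_abs_self _).trans <| abs_le_of_mulVec_eq_smul negadvMatrix.nonneg
      (fun j => add_pos (xi_pos j) (xi_pos _)) negadvMatrix.mulVec_le
      ((WithLp.ofLp_eq_zero 2).ne.2 <| hR.eigenvectorBasis.orthonormal.ne_zero i)
      (hR.mulVec_eigenvectorBasis i)
  calc ∑ i, |hR.eigenvalues i| ≤ 2 * (∑ k ∈ range n, xi k ^ 2 + 1) - (negadvMatrix n).trace :=
        hR.sum_abs_eigenvalues_le hpos (by positivity) hbound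
    _ = 2 * ∑ k ∈ range n, xi k ^ 2 + 1 := by rw [negadvMatrix.trace_eq (by omega)]; ring
end
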